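/- arXiv:2007.09530 — 4 statements merged into one kernel-verified Lean document; each statement's English description precedes it below -/
import Mathlib

section
/- Let β ∈ ℝ^p, x̂ ∈ ℝ^p, γ ≥ 0 and λ > 0, and let ‖·‖ be a norm on ℝ^p with dual norm ‖·‖_*. Then sup_{x ∈ ℝ^p} { γ·log(1+exp(−β^⊤x)) − λ·‖x − x̂‖ } equals γ·log(1+exp(−β^⊤x̂)) if γ‖β‖_* ≤ λ, and equals +∞ otherwise. -/
open Real

noncomputable section

lemma softplus_lip (a b : ℝ) :
    Real.log (1 + Real.exp a) ≤ Real.log (1 + Real.exp b) + |a - b| := by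
  rcases le_total a b with h | h
  · have h1 : Real.log (1 + Real.exp a) ≤ Real.log (1 + Real.exp b) :=
      Real.log_le_log (by positivity) (by linarith [Real.exp_le_exp.mpr h])
    have h2 := abs_nonneg (a - b); linarith
  · have hge : (1:ℝ) ≤ Real.exp (a - b) := Real.one_le_exp (by linarith)
    have hmul : Real.exp (a - b) * Real.exp b = Real.exp a := by
      rw [← Real.exp_add]; ring_nf
    have h1 : (1 : ℝ) + Real.exp a ≤ Real.exp (a - b) * (1 + Real.exp b) := by nlinarith
    calc Real.log (1 + Real.exp a)
        ≤ Real.log (Real.exp (a - b) * (1 + Real.exp b)) :=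
          Real.log_le_log (by positivity) h1
      _ = (a - b) + Real.log (1 + Real.exp b) := by
          rw [Real.log_mul (by positivity) (by positivity), Real.log_exp]
      _ ≤ Real.log (1 + Real.exp b) + |a - b| := by
          have := le_abs_self (a - b); linarith

lemma le_softplus (s : ℝ) : s ≤ Real.log (1 + Real.exp s) := by
  rw [Real.le_log_iff_exp_le (by positivity)]; linarith [Real.exp_pos s]

/-- **Conjugacy-type supremum evaluation (Lemma A.2).** For a finite-dimensional real
normed space `E` (a copy of `ℝ^p` with an arbitrary norm), a linear functional `β`
(an element of `ℝ^p`, whose operator norm `‖β‖` is the dual norm `‖β‖_*`), a point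
`xh ∈ E`, `γ ≥ 0` and `lam > 0`:
`sup_{x} { γ·log(1+exp(−β^⊤x)) − lam·‖x − xh‖ }` equals
`γ·log(1+exp(−β^⊤xh))` if `γ‖β‖_* ≤ lam`, and `+∞` otherwise. -/
theorem statement2 {E : Type*} [NormedAddCommGroup E] [NormedSpace ℝ E]
    [FiniteDimensional ℝ E] (β : E →L[ℝ] ℝ) (xh : E) (γ lam : ℝ)
    (hγ : 0 ≤ γ) (hlam : 0 < lam) :
    (⨆ x : E, ((γ * Real.log (1 + Real.exp (-(β x))) - lam * ‖x - xh‖ : ℝ) : EReal))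
      = if γ * ‖β‖ ≤ lam then ((γ * Real.log (1 + Real.exp (-(β xh))) : ℝ) : EReal)
        else (⊤ : EReal) := by
  split_ifs with hc
  · apply le_antisymm
    · apply iSup_le
      intro x
      rw [EReal.coe_le_coe_iff]
      have hlip := softplus_lip (-(β x)) (-(β xh))
      have habs : |(-(β x)) - (-(β xh))| ≤ ‖β‖ * ‖x - xh‖ := by
        have h1 : (-(β x)) - (-(β xh)) = -(β (x - xh)) := by
          simp [map_sub]; ring
        rw [h1, abs_neg]
        exact β.le_opNorm (x - xh)
      have h2 : γ * Real.log (1 + Real.exp (-(β x)))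
          ≤ γ * Real.log (1 + Real.exp (-(β xh))) + γ * (‖β‖ * ‖x - xh‖) := by
        nlinarith [abs_nonneg ((-(β x)) - (-(β xh)))]
      have h3 : γ * (‖β‖ * ‖x - xh‖) ≤ lam * ‖x - xh‖ := by
        have := norm_nonneg (x - xh)
        nlinarith
      linarith
    · have h := le_iSup (fun x : E =>
        ((γ * Real.log (1 + Real.exp (-(β x))) - lam * ‖x - xh‖ : ℝ) : EReal)) xh
      simpa using h
  · rw [iSup_eq_top]
    intro b hb
    obtain ⟨M, hbM, -⟩ := EReal.exists_between_coe_real hb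
    push_neg at hc
    have hγpos : 0 < γ := by
      rcases lt_or_eq_of_le hγ with h | h
      · exact h
      · exfalso; rw [← h] at hc; simp at hc; linarith
    have hr : lam / γ < ‖β‖ := (div_lt_iff₀ hγpos).mpr (by nlinarith)
    obtain ⟨u, hu1, hur⟩ := β.exists_lt_apply_of_lt_opNorm hr
    set v : E := if 0 ≤ β u then -u else u with hv
    have hβv : β v = -|β u| := by
      by_cases h : 0 ≤ β u
      · simp [hv, h, abs_of_nonneg h]
      · push_neg at h
        simp [hv, not_le.mpr h, abs_of_neg h]
    have hvnorm : ‖v‖ ≤ 1 := by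
      by_cases h : 0 ≤ β u <;> simp [hv, h] <;> linarith
    have habs : |β u| = ‖β u‖ := rfl
    have hc2 : 0 < γ * |β u| - lam := by
      rw [habs]
      have h4 : lam / γ < ‖β u‖ := hur
      rw [div_lt_iff₀ hγpos] at h4
      nlinarith
    set c : ℝ := γ * |β u| - lam with hcdef
    set t : ℝ := max 0 ((M + γ * β xh + 1) / c) with ht
    have ht0 : 0 ≤ t := le_max_left _ _
    have htc : M + γ * β xh + 1 ≤ t * c := by
      have h1 : (M + γ * β xh + 1) / c ≤ t := le_max_right _ _
      calc M + γ * β xh + 1 = ((M + γ * β xh + 1) / c) * c := by field_simp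
        _ ≤ t * c := by nlinarith
    refine ⟨xh + t • v, ?_⟩
    apply lt_trans hbM
    rw [EReal.coe_lt_coe_iff]
    have hnorm : ‖xh + t • v - xh‖ ≤ t := by
      have h5 : xh + t • v - xh = t • v := by abel
      rw [h5, norm_smul, Real.norm_eq_abs, abs_of_nonneg ht0]
      nlinarith
    have hval : β (xh + t • v) = β xh - t * |β u| := by
      simp [map_add, map_smul, hβv]; ring
    have hlb : -(β xh) + t * |β u| ≤ Real.log (1 + Real.exp (-(β (xh + t • v)))) := by
      have h6 := le_softplus (-(β (xh + t • v)))
      rw [hval] at h6 ⊢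
      calc -(β xh) + t * |β u| = -(β xh - t * |β u|) := by ring
        _ ≤ _ := h6
    have h1 : γ * (-(β xh) + t * |β u|) ≤ γ * Real.log (1 + Real.exp (-(β (xh + t • v)))) := by
      nlinarith
    have h2 : lam * ‖xh + t • v - xh‖ ≤ lam * t := by nlinarith
    have h3 : γ * (-(β xh) + t * |β u|) - lam * t = -(γ * β xh) + t * c := by
      rw [hcdef]; ring
    nlinarith

end
end

section
/- Let h: ℝ^p → [0,1] be a measurable classifier, τ ∈ [0,1], f(z) = 1_{z ≥ τ}, and let P̂_N be the empirical distribution of N test samples (x̂_i, â_i, ŷ_i) ∈ ℝ^p × {0,1} × {0,1} with p̂_{a1} = P̂_N(A=a, Y=1) > 0 for a ∈ {0,1}. Define Ū_f = sup_{Q ∈ B_ρ(P̂_N)} U_f(Q,h), U̲_f = inf_{Q ∈ B_ρ(P̂_N)} U_f(Q,h), and V(a,a') = sup_{Q ∈ B_ρ(P̂_N)} Q[X ∈ 𝒳₁ | A=a, Y=1] − Q[X ∈ 𝒳₁ | A=a', Y=1] with 𝒳₁ = {x : h(x) ≥ τ}. Then Ū_f = max{V(1,0), V(0,1)} and U̲_f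 = −min{0, V(1,0), V(0,1)}. -/
/-
Every unfairness value is the absolute value of a gap `Q[𝒳₁ | A=1,Y=1] − Q[𝒳₁ | A=0,Y=1]`, so
the set of unfairness values is `|·|` applied to the set `S` of attainable gaps, with
`sup S = V(1,0)` and `inf S = −V(0,1)`. Then `sup |S| = max (sup S) (−inf S)` for any bounded set.
Since the ambiguity set is convex and, with the `(A,Y)`-marginal pinned, conditional
probabilities are affine along mixtures, `S` is an interval; hence `inf |S|` is `inf S` if
`S ≥ 0`, `−sup S` if `S ≤ 0` and `0` otherwise, which is `−min {0, V(1,0), V(0,1)}`.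
-/

open MeasureTheory Real Set
open scoped ENNReal

noncomputable section

variable {E : Type*} [NormedAddCommGroup E] [NormedSpace ℝ E] [MeasurableSpace E] [BorelSpace E]
variable {N : ℕ}

/-- Ground transportation cost
`c((x,a,y),(x',a',y')) = ‖x−x'‖ + κ_𝒜·|a−a'| + κ_𝒴·|y−y'|` on `ℝ^p × {0,1} × {0,1}`,
with `{0,1}` encoded by `Bool` (`true = 1`) and `κ_𝒜, κ_𝒴 ∈ (0,∞]`. -/
def tcost (κA κY : ℝ≥0∞) (ξ ξ' : E × Bool × Bool) : ℝ≥0∞ :=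
  ENNReal.ofReal ‖ξ.1 - ξ'.1‖ + (if ξ.2.1 = ξ'.2.1 then 0 else κA) +
    (if ξ.2.2 = ξ'.2.2 then 0 else κY)

/-- Type-1 Wasserstein distance: infimum of the expected ground cost over all couplings. -/
def wass (κA κY : ℝ≥0∞) (μ ν : Measure (E × Bool × Bool)) : ℝ≥0∞ :=
  ⨅ (pl : Measure ((E × Bool × Bool) × (E × Bool × Bool)))
    (_ : pl.map Prod.fst = μ) (_ : pl.map Prod.snd = ν),
      ∫⁻ q, tcost κA κY q.1 q.2 ∂pl

/-- Empirical (uniform) distribution on the `N` samples. -/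
def emp (xh : Fin N → E) (ah yh : Fin N → Bool) : Measure (E × Bool × Bool) :=
  (N : ℝ≥0∞)⁻¹ • ∑ i : Fin N, Measure.dirac (xh i, ah i, yh i)

/-- Empirical marginal probability `p̂_{ay}` of `(A,Y) = (a,y)`. -/
def pfrac (ah yh : Fin N → Bool) (a y : Bool) : ℝ :=
  ((Finset.univ.filter fun i => ah i = a ∧ yh i = y).card : ℝ) / N

/-- Wasserstein ambiguity set of radius `ρ` around the empirical distribution,
intersected with the set of distributions whose `(A,Y)`-marginal is the empirical one. -/
def Bset (κA κY : ℝ≥0∞) (ρ : ℝ) (xh : Fin N → E) (ah yh : Fin N → Bool) :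
    Set (Measure (E × Bool × Bool)) :=
  {Q | IsProbabilityMeasure Q ∧ wass κA κY Q (emp xh ah yh) ≤ ENNReal.ofReal ρ ∧
    ∀ a y : Bool, Q {ξ | ξ.2.1 = a ∧ ξ.2.2 = y} = ENNReal.ofReal (pfrac ah yh a y)}

/-- `|a − a'|` for `a, a' ∈ {0,1}` encoded as Booleans. -/
def bd (a b : Bool) : ℝ := if a = b then 0 else 1


/-- Conditional expectation `E_Q[g | A = a, Y = y]`. -/
def cexp (Q : Measure (E × Bool × Bool)) (g : E × Bool × Bool → ℝ) (a y : Bool) : ℝ :=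
  (∫ ξ in {ξ | ξ.2.1 = a ∧ ξ.2.2 = y}, g ξ ∂Q) / (Q {ξ | ξ.2.1 = a ∧ ξ.2.2 = y}).toReal

/-- Unfairness measure
`U_f(Q,h) = |E_Q[f(h(X)) | A=1, Y=1] − E_Q[f(h(X)) | A=0, Y=1]|`. -/
def unfair (f : ℝ → ℝ) (h : E → ℝ) (Q : Measure (E × Bool × Bool)) : ℝ :=
  |cexp Q (fun ξ => f (h ξ.1)) true true - cexp Q (fun ξ => f (h ξ.1)) false true|

/-- `V(a,a') = sup_{Q ∈ B_ρ(P̂_N)} Q[X ∈ 𝒳₁ | A=a, Y=1] − Q[X ∈ 𝒳₁ | A=a', Y=1]`,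
where `𝒳₁ = {x : h(x) ≥ τ}`. -/
def Vval (κA κY : ℝ≥0∞) (ρ : ℝ) (xh : Fin N → E) (ah yh : Fin N → Bool)
    (h : E → ℝ) (τ : ℝ) (a a' : Bool) : ℝ :=
  sSup {v : ℝ | ∃ Q ∈ Bset κA κY ρ xh ah yh,
    v = cexp Q (fun ξ => if τ ≤ h ξ.1 then 1 else 0) a true
      - cexp Q (fun ξ => if τ ≤ h ξ.1 then 1 else 0) a' true}

theorem csSup_abs_image {S : Set ℝ} (hne : S.Nonempty) (hA : BddAbove S) (hB : BddBelow S) :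
    sSup (abs '' S) = max (sSup S) (-sInf S) := by
  have hbdd : BddAbove (abs '' S) := by
    obtain ⟨M, hM⟩ := hA
    obtain ⟨m, hm⟩ := hB
    refine ⟨max M (-m), ?_⟩
    rintro _ ⟨v, hv, rfl⟩
    exact abs_le.2 ⟨by linarith [hm hv, le_max_right M (-m)],
      by linarith [hM hv, le_max_left M (-m)]⟩
  apply le_antisymm
  · refine csSup_le (hne.image _) ?_
    rintro _ ⟨v, hv, rfl⟩
    exact abs_le.2 ⟨by linarith [csInf_le hB hv, le_max_right (sSup S) (-sInf S)],
      by linarith [le_csSup hA hv, le_max_left (sSup S) (-sInf S)]⟩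
  · refine max_le (csSup_le hne fun v hv => ?_) (neg_le.2 (le_csInf hne fun v hv => ?_))
    · exact (le_abs_self v).trans (le_csSup hbdd (mem_image_of_mem _ hv))
    · linarith [neg_abs_le v, le_csSup hbdd (mem_image_of_mem abs hv)]

theorem csInf_abs_image {S : Set ℝ} (hS : S.OrdConnected) (hne : S.Nonempty) (hA : BddAbove S)
    (hB : BddBelow S) :
    sInf (abs '' S) = -(min 0 (min (sSup S) (-sInf S))) := by
  have hmM : sInf S ≤ sSup S := csInf_le_csSup hne hB hA
  rcases le_or_gt 0 (sInf S) with hm | hm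
  · have hS_abs : abs '' S = S :=
      (image_congr fun v hv => abs_of_nonneg (hm.trans (csInf_le hB hv))).trans (image_id S)
    rw [hS_abs, min_eq_right (by linarith : -sInf S ≤ sSup S), min_eq_right (by linarith), neg_neg]
  rcases le_or_gt (sSup S) 0 with hM | hM
  · have hS_abs : abs '' S = -S :=
      (image_congr fun v hv => abs_of_nonpos ((le_csSup hA hv).trans hM)).trans image_neg_eq_neg
    rw [hS_abs, Real.sInf_neg, min_eq_left (by linarith : sSup S ≤ -sInf S), min_eq_right hM]
  · obtain ⟨a, ha, ha0⟩ := exists_lt_of_csInf_lt hne hm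
    obtain ⟨b, hb, hb0⟩ := exists_lt_of_lt_csSup hne hM
    have h0 : (0 : ℝ) ∈ S := hS.out ha hb ⟨ha0.le, hb0.le⟩
    rw [min_eq_left (le_min hM.le (by linarith)), neg_zero]
    exact IsLeast.csInf_eq ⟨⟨0, h0, abs_zero⟩, fun _ ⟨v, _, e⟩ => e ▸ abs_nonneg v⟩

section LabelledMeasures

variable {α : Type*} [MeasurableSpace α]

theorem smul_add_smul_apply_of_apply_eq {Q₁ Q₂ : Measure α} {K : Set α} {t s p : ℝ}
    (ht : 0 ≤ t) (hs : 0 ≤ s) (hts : t + s = 1) (hp : 0 ≤ p)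
    (h₁ : Q₁ K = ENNReal.ofReal p) (h₂ : Q₂ K = ENNReal.ofReal p) :
    (ENNReal.ofReal t • Q₁ + ENNReal.ofReal s • Q₂) K = ENNReal.ofReal p := by
  rw [Measure.add_apply, Measure.smul_apply, Measure.smul_apply, h₁, h₂, smul_eq_mul,
    smul_eq_mul, ← ENNReal.ofReal_mul ht, ← ENNReal.ofReal_mul hs,
    ← ENNReal.ofReal_add (by positivity) (by positivity), ← add_mul, hts, one_mul]

theorem isProbabilityMeasure_smul_add_smul {Q₁ Q₂ : Measure α} [IsProbabilityMeasure Q₁]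
    [IsProbabilityMeasure Q₂] {t s : ℝ} (ht : 0 ≤ t) (hs : 0 ≤ s) (hts : t + s = 1) :
    IsProbabilityMeasure (ENNReal.ofReal t • Q₁ + ENNReal.ofReal s • Q₂) := by
  have h := smul_add_smul_apply_of_apply_eq (Q₁ := Q₁) (Q₂ := Q₂) (K := univ) ht hs hts
    zero_le_one (by simp) (by simp)
  exact ⟨by simpa using h⟩

theorem measurableSet_cell (a y : Bool) :
    MeasurableSet {ξ : α × Bool × Bool | ξ.2.1 = a ∧ ξ.2.2 = y} :=
  (measurable_snd.fst (measurableSet_singleton a)).inter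
    (measurable_snd.snd (measurableSet_singleton y))

theorem cexp_mem_Icc {g : α × Bool × Bool → ℝ} (hg : ∀ ξ, g ξ ∈ Icc (0 : ℝ) 1)
    (Q : Measure (α × Bool × Bool)) [IsFiniteMeasure Q] (a y : Bool) :
    cexp Q g a y ∈ Icc (0 : ℝ) 1 := by
  set K := {ξ : α × Bool × Bool | ξ.2.1 = a ∧ ξ.2.2 = y}
  have hle : ∫ ξ in K, g ξ ∂Q ≤ (Q K).toReal :=
    calc ∫ ξ in K, g ξ ∂Q ≤ ∫ _ in K, (1 : ℝ) ∂Q :=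
          integral_mono_of_nonneg (ae_of_all _ fun ξ => (hg ξ).1) (integrable_const 1)
            (ae_of_all _ fun ξ => (hg ξ).2)
      _ = (Q K).toReal := by simp [measureReal_def]
  exact ⟨div_nonneg (integral_nonneg fun ξ => (hg ξ).1) ENNReal.toReal_nonneg,
    div_le_one_of_le₀ hle ENNReal.toReal_nonneg⟩

/-- Conditional expectations are ratios of affine functions of `Q`; pinning the mass of the
conditioning cell makes them affine. -/
theorem cexp_smul_add_smul {g : α × Bool × Bool → ℝ} {Q₁ Q₂ : Measure (α × Bool × Bool)}
    (hg₁ : Integrable g Q₁) (hg₂ : Integrable g Q₂) {t s p : ℝ} (ht : 0 ≤ t) (hs : 0 ≤ s)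
    (hts : t + s = 1) {a y : Bool} (hp : 0 < p)
    (h₁ : Q₁ {ξ | ξ.2.1 = a ∧ ξ.2.2 = y} = ENNReal.ofReal p)
    (h₂ : Q₂ {ξ | ξ.2.1 = a ∧ ξ.2.2 = y} = ENNReal.ofReal p) :
    cexp (ENNReal.ofReal t • Q₁ + ENNReal.ofReal s • Q₂) g a y
      = t * cexp Q₁ g a y + s * cexp Q₂ g a y := by
  rw [cexp, cexp, cexp]
  set K := {ξ : α × Bool × Bool | ξ.2.1 = a ∧ ξ.2.2 = y}
  have hint : ∫ ξ in K, g ξ ∂(ENNReal.ofReal t • Q₁ + ENNReal.ofReal s • Q₂)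
      = t * ∫ ξ in K, g ξ ∂Q₁ + s * ∫ ξ in K, g ξ ∂Q₂ := by
    rw [Measure.restrict_add, Measure.restrict_smul, Measure.restrict_smul,
      integral_add_measure (hg₁.restrict.smul_measure ENNReal.ofReal_ne_top)
        (hg₂.restrict.smul_measure ENNReal.ofReal_ne_top),
      integral_smul_measure, integral_smul_measure, ENNReal.toReal_ofReal ht,
      ENNReal.toReal_ofReal hs, smul_eq_mul, smul_eq_mul]
  rw [hint, smul_add_smul_apply_of_apply_eq ht hs hts hp.le h₁ h₂, h₁, h₂,
    ENNReal.toReal_ofReal hp.le]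
  field_simp

theorem ne_zero_of_pfrac_pos {ah yh : Fin N → Bool} {a y : Bool} (hp : 0 < pfrac ah yh a y) :
    N ≠ 0 := by
  rintro rfl
  simp [pfrac] at hp

theorem isProbabilityMeasure_emp (xh : Fin N → α) (ah yh : Fin N → Bool) (hN : N ≠ 0) :
    IsProbabilityMeasure (emp xh ah yh) := by
  constructor
  simp only [emp, Measure.smul_apply, Measure.finsetSum_apply, measure_univ, Finset.sum_const,
    Finset.card_univ, Fintype.card_fin, nsmul_eq_mul, mul_one, smul_eq_mul]
  exact ENNReal.inv_mul_cancel (by exact_mod_cast hN) (by simp)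

theorem emp_cell (xh : Fin N → α) (ah yh : Fin N → Bool) (hN : N ≠ 0) (a y : Bool) :
    emp xh ah yh {ξ | ξ.2.1 = a ∧ ξ.2.2 = y} = ENNReal.ofReal (pfrac ah yh a y) := by
  have hdirac (i : Fin N) :
      Measure.dirac (xh i, ah i, yh i) {ξ : α × Bool × Bool | ξ.2.1 = a ∧ ξ.2.2 = y}
        = if ah i = a ∧ yh i = y then 1 else 0 := by
    rw [Measure.dirac_apply' _ (measurableSet_cell a y)]
    by_cases hi : ah i = a ∧ yh i = y <;> simp [hi]
  have hN' : 0 < (N : ℝ) := by exact_mod_cast Nat.pos_of_ne_zero hN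
  rw [emp, Measure.smul_apply, Measure.finsetSum_apply, Finset.sum_congr rfl fun i _ => hdirac i,
    Finset.sum_boole, pfrac, ENNReal.ofReal_div_of_pos hN', ENNReal.ofReal_natCast,
    ENNReal.ofReal_natCast, div_eq_mul_inv, mul_comm, smul_eq_mul]

end LabelledMeasures

section Ambiguity

variable {α : Type*} [NormedAddCommGroup α] [MeasurableSpace α]

theorem wass_self (κA κY : ℝ≥0∞) (μ : Measure (α × Bool × Bool)) : wass κA κY μ μ = 0 := by
  have hdiag : Measurable fun ξ : α × Bool × Bool => (ξ, ξ) := measurable_id.prodMk measurable_id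
  refine le_antisymm (iInf_le_of_le (μ.map fun ξ => (ξ, ξ)) ?_) zero_le
  refine iInf_le_of_le ?_ (iInf_le_of_le ?_ ?_)
  · rw [Measure.map_map measurable_fst hdiag]; exact Measure.map_id
  · rw [Measure.map_map measurable_snd hdiag]; exact Measure.map_id
  · exact (lintegral_map_le _ _).trans (by simp [tcost])

theorem wass_smul_add_le_of_le {κA κY : ℝ≥0∞} {μ₁ μ₂ ν : Measure (α × Bool × Bool)}
    {c₁ c₂ b : ℝ≥0∞} (hc : c₁ + c₂ = 1) (h₁ : wass κA κY μ₁ ν ≤ b) (h₂ : wass κA κY μ₂ ν ≤ b) :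
    wass κA κY (c₁ • μ₁ + c₂ • μ₂) ν ≤ b := by
  refine ENNReal.le_of_forall_pos_le_add fun ε hε hb => ?_
  have hbε : b < b + ε := ENNReal.lt_add_right hb.ne (by exact_mod_cast hε.ne')
  obtain ⟨γ₁, hγ₁, hγ₁', hcost₁⟩ : ∃ γ, γ.map Prod.fst = μ₁ ∧ γ.map Prod.snd = ν ∧
      ∫⁻ q, tcost κA κY q.1 q.2 ∂γ < b + ε := by
    simpa only [wass, iInf_lt_iff, exists_prop] using h₁.trans_lt hbε
  obtain ⟨γ₂, hγ₂, hγ₂', hcost₂⟩ : ∃ γ, γ.map Prod.fst = μ₂ ∧ γ.map Prod.snd = ν ∧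
      ∫⁻ q, tcost κA κY q.1 q.2 ∂γ < b + ε := by
    simpa only [wass, iInf_lt_iff, exists_prop] using h₂.trans_lt hbε
  have hfst : (c₁ • γ₁ + c₂ • γ₂).map Prod.fst = c₁ • μ₁ + c₂ • μ₂ := by
    rw [Measure.map_add _ _ measurable_fst, Measure.map_smul, Measure.map_smul, hγ₁, hγ₂]
  have hsnd : (c₁ • γ₁ + c₂ • γ₂).map Prod.snd = ν := by
    rw [Measure.map_add _ _ measurable_snd, Measure.map_smul, Measure.map_smul, hγ₁', hγ₂',
      ← add_smul, hc, one_smul]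
  calc wass κA κY (c₁ • μ₁ + c₂ • μ₂) ν
      ≤ ∫⁻ q, tcost κA κY q.1 q.2 ∂(c₁ • γ₁ + c₂ • γ₂) :=
        iInf_le_of_le _ (iInf_le_of_le hfst (iInf_le _ hsnd))
    _ = c₁ * ∫⁻ q, tcost κA κY q.1 q.2 ∂γ₁ + c₂ * ∫⁻ q, tcost κA κY q.1 q.2 ∂γ₂ := by
        rw [lintegral_add_measure, lintegral_smul_measure, lintegral_smul_measure, smul_eq_mul,
          smul_eq_mul]
    _ ≤ c₁ * (b + ε) + c₂ * (b + ε) := by gcongr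
    _ = b + ε := by rw [← add_mul, hc, one_mul]

variable {κA κY : ℝ≥0∞} {ρ : ℝ} {xh : Fin N → α} {ah yh : Fin N → Bool}

theorem emp_mem_Bset (hN : N ≠ 0) : emp xh ah yh ∈ Bset κA κY ρ xh ah yh :=
  ⟨isProbabilityMeasure_emp xh ah yh hN, by simp [wass_self], emp_cell xh ah yh hN⟩

theorem smul_add_smul_mem_Bset {Q₁ Q₂ : Measure (α × Bool × Bool)}
    (hQ₁ : Q₁ ∈ Bset κA κY ρ xh ah yh) (hQ₂ : Q₂ ∈ Bset κA κY ρ xh ah yh) {t s : ℝ}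
    (ht : 0 ≤ t) (hs : 0 ≤ s) (hts : t + s = 1) :
    ENNReal.ofReal t • Q₁ + ENNReal.ofReal s • Q₂ ∈ Bset κA κY ρ xh ah yh := by
  obtain ⟨_, hW₁, hcell₁⟩ := hQ₁
  obtain ⟨_, hW₂, hcell₂⟩ := hQ₂
  refine ⟨isProbabilityMeasure_smul_add_smul ht hs hts, wass_smul_add_le_of_le ?_ hW₁ hW₂,
    fun a y => smul_add_smul_apply_of_apply_eq ht hs hts (by unfold pfrac; positivity)
      (hcell₁ a y) (hcell₂ a y)⟩
  rw [← ENNReal.ofReal_add ht hs, hts, ENNReal.ofReal_one]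

variable (κA κY ρ xh ah yh) in
def condGapSet (g : α × Bool × Bool → ℝ) (a a' : Bool) : Set ℝ :=
  {v | ∃ Q ∈ Bset κA κY ρ xh ah yh, v = cexp Q g a true - cexp Q g a' true}

variable {g : α × Bool × Bool → ℝ}

theorem neg_condGapSet (a a' : Bool) :
    -condGapSet κA κY ρ xh ah yh g a a' = condGapSet κA κY ρ xh ah yh g a' a := by
  ext v
  simp only [condGapSet, mem_neg]
  constructor <;> rintro ⟨Q, hQ, e⟩ <;> exact ⟨Q, hQ, by linarith⟩

theorem setOf_unfair_eq_abs_image (f : ℝ → ℝ) (h : α → ℝ) :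
    {v | ∃ Q ∈ Bset κA κY ρ xh ah yh, v = unfair f h Q}
      = abs '' condGapSet κA κY ρ xh ah yh (fun ξ => f (h ξ.1)) true false := by
  ext v
  constructor
  · rintro ⟨Q, hQ, rfl⟩
    exact ⟨_, ⟨Q, hQ, rfl⟩, rfl⟩
  · rintro ⟨_, ⟨Q, hQ, rfl⟩, rfl⟩
    exact ⟨Q, hQ, rfl⟩

theorem condGapSet_nonempty (hN : N ≠ 0) (a a' : Bool) :
    (condGapSet κA κY ρ xh ah yh g a a').Nonempty :=
  ⟨_, emp xh ah yh, emp_mem_Bset hN, rfl⟩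

theorem condGapSet_subset_Icc (hg : ∀ ξ, g ξ ∈ Icc (0 : ℝ) 1) (a a' : Bool) :
    condGapSet κA κY ρ xh ah yh g a a' ⊆ Icc (-1) 1 := by
  rintro _ ⟨Q, ⟨hQ, -⟩, rfl⟩
  have h₁ := cexp_mem_Icc hg Q a true
  have h₂ := cexp_mem_Icc hg Q a' true
  exact ⟨by linarith [h₁.1, h₂.2], by linarith [h₁.2, h₂.1]⟩

theorem convex_condGapSet (hg : Measurable g) (hg01 : ∀ ξ, g ξ ∈ Icc (0 : ℝ) 1) {a a' : Bool}
    (ha : 0 < pfrac ah yh a true) (ha' : 0 < pfrac ah yh a' true) :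
    Convex ℝ (condGapSet κA κY ρ xh ah yh g a a') := by
  rintro _ ⟨Q₁, hQ₁, rfl⟩ _ ⟨Q₂, hQ₂, rfl⟩ t s ht hs hts
  have : IsProbabilityMeasure Q₁ := hQ₁.1
  have : IsProbabilityMeasure Q₂ := hQ₂.1
  have hint (Q : Measure (α × Bool × Bool)) [IsFiniteMeasure Q] : Integrable g Q :=
    Integrable.of_mem_Icc 0 1 hg.aemeasurable (ae_of_all _ hg01)
  refine ⟨_, smul_add_smul_mem_Bset hQ₁ hQ₂ ht hs hts, ?_⟩
  rw [cexp_smul_add_smul (hint Q₁) (hint Q₂) ht hs hts ha (hQ₁.2.2 a true) (hQ₂.2.2 a true),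
    cexp_smul_add_smul (hint Q₁) (hint Q₂) ht hs hts ha' (hQ₁.2.2 a' true) (hQ₂.2.2 a' true),
    smul_eq_mul, smul_eq_mul]
  ring

end Ambiguity

theorem statement7_general
    (xh : Fin N → E) (ah yh : Fin N → Bool)
    (h : E → ℝ) (hmeas : Measurable h)
    (τ : ℝ)
    (κA κY : ℝ≥0∞)
    (ρ : ℝ)
    (hp1 : 0 < pfrac ah yh true true) (hp0 : 0 < pfrac ah yh false true) :
    sSup {v : ℝ | ∃ Q ∈ Bset κA κY ρ xh ah yh,
        v = unfair (fun z => if τ ≤ z then 1 else 0) h Q}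
      = max (Vval κA κY ρ xh ah yh h τ true false) (Vval κA κY ρ xh ah yh h τ false true) ∧
    sInf {v : ℝ | ∃ Q ∈ Bset κA κY ρ xh ah yh,
        v = unfair (fun z => if τ ≤ z then 1 else 0) h Q}
      = -(min 0 (min (Vval κA κY ρ xh ah yh h τ true false)
            (Vval κA κY ρ xh ah yh h τ false true))) := by
  let g : E × Bool × Bool → ℝ := fun ξ => if τ ≤ h ξ.1 then 1 else 0
  have hg : Measurable g :=
    Measurable.ite (hmeas.comp measurable_fst measurableSet_Ici) measurable_const measurable_const
  have hg01 (ξ : E × Bool × Bool) : g ξ ∈ Icc (0 : ℝ) 1 := by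
    by_cases hξ : τ ≤ h ξ.1 <;> simp [g, hξ]
  let S := condGapSet κA κY ρ xh ah yh g true false
  have hne : S.Nonempty := condGapSet_nonempty (ne_zero_of_pfrac_pos hp1) true false
  have hA : BddAbove S := bddAbove_Icc.mono (condGapSet_subset_Icc hg01 true false)
  have hB : BddBelow S := bddBelow_Icc.mono (condGapSet_subset_Icc hg01 true false)
  have hV₁₀ : Vval κA κY ρ xh ah yh h τ true false = sSup S := rfl
  have hV₀₁ : Vval κA κY ρ xh ah yh h τ false true = -sInf S := by
    rw [← Real.sSup_neg, neg_condGapSet]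
    rfl
  rw [setOf_unfair_eq_abs_image, hV₁₀, hV₀₁]
  exact ⟨csSup_abs_image hne hA hB, csInf_abs_image
    (convex_iff_ordConnected.1 (convex_condGapSet hg hg01 hp1 hp0)) hne hA hB⟩

/-- **Theorem 3 (Unfairness quantification), reduction to `V`.** With
`f(z) = 1_{z ≥ τ}`, the worst-case unfairness `Ū_f = sup_{Q ∈ B_ρ(P̂_N)} U_f(Q,h)`
equals `max{V(1,0), V(0,1)}` and the best-case unfairness
`U̲_f = inf_{Q ∈ B_ρ(P̂_N)} U_f(Q,h)` equals `−min{0, V(1,0), V(0,1)}`. -/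
theorem statement7 [FiniteDimensional ℝ E]
    (xh : Fin N → E) (ah yh : Fin N → Bool)
    (h : E → ℝ) (hmeas : Measurable h) (hrange : ∀ x, h x ∈ Set.Icc (0 : ℝ) 1)
    (τ : ℝ) (hτ : τ ∈ Set.Icc (0 : ℝ) 1)
    (κA κY : ℝ≥0∞) (hκA : 0 < κA) (hκY : 0 < κY)
    (ρ : ℝ) (hρ : 0 ≤ ρ)
    (hp1 : 0 < pfrac ah yh true true) (hp0 : 0 < pfrac ah yh false true) :
    sSup {v : ℝ | ∃ Q ∈ Bset κA κY ρ xh ah yh,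
        v = unfair (fun z => if τ ≤ z then 1 else 0) h Q}
      = max (Vval κA κY ρ xh ah yh h τ true false) (Vval κA κY ρ xh ah yh h τ false true) ∧
    sInf {v : ℝ | ∃ Q ∈ Bset κA κY ρ xh ah yh,
        v = unfair (fun z => if τ ≤ z then 1 else 0) h Q}
      = -(min 0 (min (Vval κA κY ρ xh ah yh h τ true false)
            (Vval κA κY ρ xh ah yh h τ false true))) :=
  statement7_general xh ah yh h hmeas τ κA κY ρ hp1 hp0

end
end

section
/- Let (M, dist) be a metric space, S ⊆ M a nonempty set, x̂ ∈ M, r ≥ 0 and λ ≥ 0. Then sup_{x ∈ M} { r·1_S(x) − λ·dist(x, x̂) } = max{0, r − λ·dist(x̂, S)}, where dist(x̂, S) = inf_{x ∈ S} dist(x, x̂). (This is the key supremum evaluation used in the dual reformulation of the worst-case unfairness for the equalized-opportunities indicator f(z) = 1_{z≥τ}, with S = 𝒳₁ = {x : h(x) ≥ τ} and r the conditional-probability weight r_a.) -/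
open Metric Set

theorem statement11 {M : Type*} [MetricSpace M] (S : Set M) (hS : S.Nonempty)
    (xh : M) (r lam : ℝ) (hr : 0 ≤ r) (hlam : 0 ≤ lam) :
    (⨆ x : M, (S.indicator (fun _ => r) x - lam * dist x xh))
      = max 0 (r - lam * Metric.infDist xh S) := by
  set g : M → ℝ := fun x => S.indicator (fun _ => r) x - lam * dist x xh with hg
  have hub : ∀ x, g x ≤ max 0 (r - lam * Metric.infDist xh S) := by
    intro x
    by_cases hx : x ∈ S
    · simp only [hg, Set.indicator_of_mem hx]
      refine le_max_of_le_right ?_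
      have h1 : Metric.infDist xh S ≤ dist x xh := by
        rw [dist_comm]; exact Metric.infDist_le_dist_of_mem hx
      nlinarith
    · simp only [hg, Set.indicator_of_notMem hx]
      refine le_max_of_le_left ?_
      have := dist_nonneg (x := x) (y := xh)
      nlinarith
  have hbdd : BddAbove (Set.range g) := ⟨_, Set.forall_mem_range.mpr hub⟩
  apply le_antisymm
  · have : Nonempty M := ⟨xh⟩
    exact ciSup_le hub
  · rw [max_le_iff]
    refine ⟨?_, ?_⟩
    · have h := le_ciSup hbdd xh
      have hgx : (0:ℝ) ≤ g xh := by
        simp only [hg, dist_self, mul_zero, sub_zero]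
        by_cases hx : xh ∈ S
        · simpa [Set.indicator_of_mem hx] using hr
        · simp [Set.indicator_of_notMem hx]
      linarith
    · refine le_of_forall_pos_le_add fun ε hε => ?_
      have hε' : 0 < ε / (lam + 1) := by positivity
      obtain ⟨x, hxS, hxd⟩ := (Metric.infDist_lt_iff hS).mp
        (by linarith : Metric.infDist xh S < Metric.infDist xh S + ε / (lam + 1))
      have h := le_ciSup hbdd x
      have hgx : g x = r - lam * dist x xh := by
        simp [hg, Set.indicator_of_mem hxS]
      rw [dist_comm] at hxd
      have hle : lam * (ε / (lam + 1)) ≤ ε := by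
        rw [mul_div_assoc', div_le_iff₀ (by linarith)]
        nlinarith
      nlinarith [le_ciSup hbdd x]
end

section
/- Let (M, dist) be a metric space, S ⊆ M a set whose complement Sᶜ is nonempty, x̂ ∈ M, r ≥ 0 and λ ≥ 0. Then sup_{x ∈ M} { −r·1_S(x) − λ·dist(x, x̂) } = max{ −r, −λ·dist(x̂, Sᶜ) }, where dist(x̂, Sᶜ) = inf_{x ∈ Sᶜ} dist(x, x̂). (This is the supremum evaluation used in the dual reformulation of the worst-case unfairness, with S = 𝒳₁ = {x : h(x) ≥ τ} closed, Sᶜ = 𝒳₀, and r the conditional-probability weight r_{a'}; in particular the supremum is not attained when x̂ ∈ S and λ·dist(x̂, Sᶜ) < r.) -/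
open Metric Set

/-- Supremum evaluation used in the dual reformulation of the worst-case unfairness:
in a metric space `M`, for a set `S` with nonempty complement, a point `xh`, and
`r, lam ≥ 0`, the supremum over `x ∈ M` of `-r * 1_S(x) - lam * dist(x, xh)` equals
`max (-r) (-lam * infDist xh Sᶜ)`. -/
theorem statement12 {M : Type*} [MetricSpace M] (S : Set M) (hS : Sᶜ.Nonempty)
    (xh : M) (r lam : ℝ) (hr : 0 ≤ r) (hlam : 0 ≤ lam) :
    (⨆ x : M, (-(S.indicator (fun _ => r) x) - lam * dist x xh))
      = max (-r) (-(lam * Metric.infDist xh Sᶜ)) := by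
  set f : M → ℝ := fun x => -(S.indicator (fun _ => r) x) - lam * dist x xh with hf
  have hub : ∀ x, f x ≤ max (-r) (-(lam * Metric.infDist xh Sᶜ)) := by
    intro x
    by_cases hx : x ∈ S
    · have : f x ≤ -r := by
        simp only [hf, indicator_of_mem hx]
        nlinarith [dist_nonneg (x := x) (y := xh)]
      exact this.trans (le_max_left _ _)
    · have hxc : x ∈ Sᶜ := hx
      have hle : Metric.infDist xh Sᶜ ≤ dist x xh := by
        rw [dist_comm]; exact Metric.infDist_le_dist_of_mem hxc
      have : f x ≤ -(lam * Metric.infDist xh Sᶜ) := by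
        simp only [hf, indicator_of_notMem hx]
        nlinarith
      exact this.trans (le_max_right _ _)
  have hbdd : BddAbove (Set.range f) := by
    refine ⟨max (-r) (-(lam * Metric.infDist xh Sᶜ)), ?_⟩
    rintro y ⟨x, rfl⟩; exact hub x
  apply le_antisymm
  · haveI : Nonempty M := ⟨xh⟩
    exact ciSup_le hub
  · apply max_le
    · by_cases hxh : xh ∈ S
      · have : f xh = -r := by simp [hf, indicator_of_mem hxh]
        calc (-r) = f xh := this.symm
          _ ≤ ⨆ x, f x := le_ciSup hbdd xh
      · have : (-r) ≤ f xh := by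
          simp [hf, indicator_of_notMem hxh]; linarith
        exact this.trans (le_ciSup hbdd xh)
    · rcases eq_or_lt_of_le hlam with hl0 | hl0
      · obtain ⟨x0, hx0⟩ := hS
        have : f x0 = 0 := by
          simp [hf, indicator_of_notMem (by exact hx0 : x0 ∉ S), ← hl0]
        rw [← hl0]
        simpa [this] using le_ciSup hbdd x0
      · apply le_of_forall_pos_le_add
        intro ε hε
        obtain ⟨x0, hx0, hd⟩ := (Metric.infDist_lt_iff hS).mp
          (show Metric.infDist xh Sᶜ < Metric.infDist xh Sᶜ + ε / lam by
            have := div_pos hε hl0; linarith)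
        have hfx0 : f x0 = -(lam * dist x0 xh) := by
          simp [hf, indicator_of_notMem (by exact hx0 : x0 ∉ S)]
        have h1 : -(lam * Metric.infDist xh Sᶜ) ≤ f x0 + ε := by
          rw [hfx0, dist_comm]
          have := (mul_lt_mul_iff_right₀ hl0).mpr hd
          rw [mul_add, mul_div_cancel₀ _ (ne_of_gt hl0)] at this
          linarith
        exact h1.trans (by linarith [le_ciSup hbdd x0])
end
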